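/- arXiv:2303.02424 — 2 statements merged into one kernel-verified Lean document; each statement's English description precedes it below -/
import Mathlib

section
/- Let A be a 4×4 real orthochronous Lorentz matrix (Aᵀ η A = η with η = diag(-1,1,1,1) and A^0_0 > 0), T = (T⁰, T¹, T², T³) ∈ ℝ⁴, u ∈ ℝ, and let x̃ be a spatial unit vector. For r > 0 define r̄(r) = √( Σ_{i=1}^{3} [ A^i_0 (u + r) + r Σ_{j=1}^{3} A^i_j x̃ʲ + Tⁱ ]² ). Set D = A^0_0 + Σ_{j=1}^{3} A^0_j x̃ʲ and L = D⁻¹ · Σ_{i=1}^{3} (A^i_0 + Σ_{j=1}^{3} A^i_j x̃ʲ)(A^i_0 u + Tⁱ). Then the function r ↦ r̄(r) − r·D − L is O(r⁻¹) as r → ∞. -/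
open Matrix Filter Asymptotics

/-- The Minkowski matrix η = diag(-1, 1, 1, 1). -/
noncomputable def minkowskiEta : Matrix (Fin 4) (Fin 4) ℝ :=
  Matrix.diagonal ![-1, 1, 1, 1]

private lemma cs3 (a0 a1 a2 b0 b1 b2 : ℝ) :
    (a0*b0 + a1*b1 + a2*b2)^2 ≤ (a0^2+a1^2+a2^2)*(b0^2+b1^2+b2^2) := by
  nlinarith [sq_nonneg (a0*b1 - a1*b0), sq_nonneg (a0*b2 - a2*b0), sq_nonneg (a1*b2 - a2*b1)]

private lemma sqrt_aux (f : ℝ → ℝ) (D L C : ℝ) (hD : 0 < D) (hC : 0 ≤ C)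
    (hf : ∀ r, f r = (r*D+L)^2 + C) :
    (fun r => Real.sqrt (f r) - r*D - L) =O[atTop] fun r : ℝ => r⁻¹ := by
  rw [isBigO_iff]
  refine ⟨C/D, ?_⟩
  filter_upwards [eventually_ge_atTop (max 1 (2*(|L|+1)/D))] with r hr
  have hr1 : (1:ℝ) ≤ r := le_trans (le_max_left _ _) hr
  have hrD : 2*(|L|+1) ≤ r*D := by
    have h2 := le_trans (le_max_right _ _) hr
    calc 2*(|L|+1) = (2*(|L|+1)/D)*D := by field_simp
      _ ≤ r*D := mul_le_mul_of_nonneg_right h2 hD.le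
  have habs := abs_nonneg L
  have hnegabs := neg_abs_le L
  have hP0 : 0 < r*D + L := by nlinarith
  have hP : r*D/2 ≤ r*D + L := by nlinarith
  have hrD0 : 0 < r*D := by nlinarith
  set P := r*D + L with hPdef
  set t := C/(2*P) with htdef
  have ht0 : 0 ≤ t := by positivity
  have ht : 2*P*t = C := by rw [htdef]; field_simp
  have hupper : Real.sqrt (P^2 + C) ≤ P + t := by
    have h1 : P^2 + C ≤ (P+t)^2 := by nlinarith [sq_nonneg t]
    calc Real.sqrt (P^2+C) ≤ Real.sqrt ((P+t)^2) := Real.sqrt_le_sqrt h1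
      _ = P + t := Real.sqrt_sq (by nlinarith)
  have hlower : P ≤ Real.sqrt (P^2 + C) := by
    nlinarith [Real.sq_sqrt (by positivity : (0:ℝ) ≤ P^2 + C),
      Real.sqrt_nonneg (P^2 + C), sq_nonneg (Real.sqrt (P^2+C) - P)]
  have hbound : |Real.sqrt (f r) - r*D - L| ≤ t := by
    rw [hf r, abs_le]
    constructor
    · nlinarith
    · nlinarith
  have hfinal : t ≤ C/D * |r⁻¹| := by
    rw [abs_of_nonneg (by positivity : (0:ℝ) ≤ r⁻¹)]
    have h2P : r*D ≤ 2*P := by nlinarith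
    have heq : C/D * r⁻¹ = C/(r*D) := by ring
    rw [heq, htdef]
    gcongr
  calc ‖Real.sqrt (f r) - r*D - L‖ = |Real.sqrt (f r) - r*D - L| := rfl
    _ ≤ t := hbound
    _ ≤ C/D * |r⁻¹| := hfinal
    _ = C/D * ‖r⁻¹‖ := rfl

private lemma lorentz_entry (A : Matrix (Fin 4) (Fin 4) ℝ)
    (hA : Aᵀ * minkowskiEta * A = minkowskiEta) (α β : Fin 4) :
    -(A 0 α * A 0 β) + (A 1 α * A 1 β + A 2 α * A 2 β + A 3 α * A 3 β)
      = Matrix.diagonal ![-1,1,1,1] α β := by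
  have h := congrFun (congrFun hA α) β
  simp [Matrix.mul_apply, minkowskiEta, Matrix.diagonal, Fin.sum_univ_four] at h ⊢
  linarith

private lemma lorentz_row (A : Matrix (Fin 4) (Fin 4) ℝ)
    (hA : Aᵀ * minkowskiEta * A = minkowskiEta) :
    -(A 0 0 * A 0 0) + (A 0 1 * A 0 1 + A 0 2 * A 0 2 + A 0 3 * A 0 3) = -1 := by
  have hv : (fun i => (![-1,1,1,1] : Fin 4 → ℝ) i * ![-1,1,1,1] i) = fun _ => (1:ℝ) := by
    funext i; fin_cases i <;> norm_num
  have heta : minkowskiEta * minkowskiEta = 1 := by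
    rw [minkowskiEta, Matrix.diagonal_mul_diagonal, hv, Matrix.diagonal_one]
  have h1 : (minkowskiEta * Aᵀ * minkowskiEta) * A = 1 := by
    calc (minkowskiEta * Aᵀ * minkowskiEta) * A = minkowskiEta * (Aᵀ * minkowskiEta * A) := by
          noncomm_ring
      _ = 1 := by rw [hA, heta]
  have h2 := mul_eq_one_comm.mp h1
  have hrowM : A * minkowskiEta * Aᵀ = minkowskiEta := by
    calc A * minkowskiEta * Aᵀ
        = (A * (minkowskiEta * Aᵀ * minkowskiEta)) * minkowskiEta := by
          simp only [Matrix.mul_assoc, heta, Matrix.mul_one]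
      _ = minkowskiEta := by rw [h2, one_mul]
  have h := congrFun (congrFun hrowM 0) 0
  simp [Matrix.mul_apply, minkowskiEta, Matrix.diagonal, Fin.sum_univ_four] at h
  linarith

/-- Positivity of D. -/
private lemma D_pos (A : Matrix (Fin 4) (Fin 4) ℝ)
    (hA : Aᵀ * minkowskiEta * A = minkowskiEta) (hpos : 0 < A 0 0)
    (x : Fin 3 → ℝ) (hx3 : x 0^2 + x 1^2 + x 2^2 = 1) :
    0 < A 0 0 + (A 0 1 * x 0 + A 0 2 * x 1 + A 0 3 * x 2) := by
  have hrow := lorentz_row A hA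
  have hcs := cs3 (A 0 1) (A 0 2) (A 0 3) (x 0) (x 1) (x 2)
  have h1 : A 0 1^2 + A 0 2^2 + A 0 3^2 = A 0 0^2 - 1 := by nlinarith [hrow]
  have hS2 : (A 0 1 * x 0 + A 0 2 * x 1 + A 0 3 * x 2)^2 ≤ A 0 0^2 - 1 := by
    calc (A 0 1 * x 0 + A 0 2 * x 1 + A 0 3 * x 2)^2
        ≤ (A 0 1^2 + A 0 2^2 + A 0 3^2) * (x 0^2 + x 1^2 + x 2^2) := hcs
      _ = A 0 0^2 - 1 := by rw [h1, hx3]; ring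
  nlinarith [hpos, hS2]

/-- Sa = D². -/
private lemma Sa_eq (A : Matrix (Fin 4) (Fin 4) ℝ)
    (hA : Aᵀ * minkowskiEta * A = minkowskiEta)
    (x : Fin 3 → ℝ) (hx3 : x 0^2 + x 1^2 + x 2^2 = 1) :
    (A 1 0 + (A 1 1 * x 0 + A 1 2 * x 1 + A 1 3 * x 2))^2
      + (A 2 0 + (A 2 1 * x 0 + A 2 2 * x 1 + A 2 3 * x 2))^2
      + (A 3 0 + (A 3 1 * x 0 + A 3 2 * x 1 + A 3 3 * x 2))^2
      = (A 0 0 + (A 0 1 * x 0 + A 0 2 * x 1 + A 0 3 * x 2))^2 := by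
  have e00 := lorentz_entry A hA 0 0
  have e01 := lorentz_entry A hA 0 1
  have e02 := lorentz_entry A hA 0 2
  have e03 := lorentz_entry A hA 0 3
  have e11 := lorentz_entry A hA 1 1
  have e12 := lorentz_entry A hA 1 2
  have e13 := lorentz_entry A hA 1 3
  have e22 := lorentz_entry A hA 2 2
  have e23 := lorentz_entry A hA 2 3
  have e33 := lorentz_entry A hA 3 3
  simp +decide [Matrix.diagonal_apply] at e00 e01 e02 e03 e11 e12 e13 e22 e23 e33
  linear_combination e00 + 2*x 0*e01 + 2*x 1*e02 + 2*x 2*e03 + x 0^2*e11 + 2*x 0*x 1*e12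
    + 2*x 0*x 2*e13 + x 1^2*e22 + 2*x 1*x 2*e23 + x 2^2*e33 + hx3

set_option maxHeartbeats 1600000 in
/-- Let `A` be an orthochronous Lorentz matrix, `T ∈ ℝ⁴`, `u ∈ ℝ`, and `x̃` a spatial unit
vector. With `r̄(r) = √(Σᵢ (Aⁱ₀(u+r) + r Σⱼ Aⁱⱼ x̃ʲ + Tⁱ)²)`,
`D = A⁰₀ + Σⱼ A⁰ⱼ x̃ʲ` and `L = D⁻¹ Σᵢ (Aⁱ₀ + Σⱼ Aⁱⱼ x̃ʲ)(Aⁱ₀ u + Tⁱ)`, the function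
`r ↦ r̄(r) − r·D − L` is `O(r⁻¹)` as `r → ∞`. -/
theorem transformed_radius_expansion
    (A : Matrix (Fin 4) (Fin 4) ℝ) (hA : Aᵀ * minkowskiEta * A = minkowskiEta)
    (hpos : 0 < A 0 0)
    (T : Fin 4 → ℝ) (u : ℝ)
    (x : Fin 3 → ℝ) (hx : ∑ i : Fin 3, (x i) ^ 2 = 1) :
    (fun r : ℝ =>
        Real.sqrt (∑ i : Fin 3,
            (A i.succ 0 * (u + r) + r * ∑ j : Fin 3, A i.succ j.succ * x j + T i.succ) ^ 2)
          - r * (A 0 0 + ∑ j : Fin 3, A 0 j.succ * x j)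
          - (A 0 0 + ∑ j : Fin 3, A 0 j.succ * x j)⁻¹ *
              ∑ i : Fin 3,
                (A i.succ 0 + ∑ j : Fin 3, A i.succ j.succ * x j) * (A i.succ 0 * u + T i.succ))
      =O[atTop] fun r : ℝ => r⁻¹ := by
  have s0 : (0:Fin 3).succ = (1:Fin 4) := rfl
  have s1 : (1:Fin 3).succ = (2:Fin 4) := rfl
  have s2 : (2:Fin 3).succ = (3:Fin 4) := rfl
  have hx3 : x 0^2 + x 1^2 + x 2^2 = 1 := by simpa [Fin.sum_univ_three] using hx
  set D := A 0 0 + ∑ j : Fin 3, A 0 j.succ * x j with hDdef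
  set L := D⁻¹ * ∑ i : Fin 3,
      (A i.succ 0 + ∑ j : Fin 3, A i.succ j.succ * x j) * (A i.succ 0 * u + T i.succ) with hLdef
  have hDval : D = A 0 0 + (A 0 1 * x 0 + A 0 2 * x 1 + A 0 3 * x 2) := by
    rw [hDdef]; simp [Fin.sum_univ_three, s0, s1, s2]
  have hD : 0 < D := hDval ▸ D_pos A hA hpos x hx3
  have hSa := Sa_eq A hA x hx3
  rw [← hDval] at hSa
  have hSab : (A 1 0 + (A 1 1 * x 0 + A 1 2 * x 1 + A 1 3 * x 2)) * (A 1 0 * u + T 1)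
      + (A 2 0 + (A 2 1 * x 0 + A 2 2 * x 1 + A 2 3 * x 2)) * (A 2 0 * u + T 2)
      + (A 3 0 + (A 3 1 * x 0 + A 3 2 * x 1 + A 3 3 * x 2)) * (A 3 0 * u + T 3) = L * D := by
    have h : L * D = ∑ i : Fin 3,
        (A i.succ 0 + ∑ j : Fin 3, A i.succ j.succ * x j) * (A i.succ 0 * u + T i.succ) := by
      rw [hLdef]; field_simp; simp only [mul_comm u]
    rw [h]; simp [Fin.sum_univ_three, s0, s1, s2]
  set C := ((A 1 0 * u + T 1)^2 + (A 2 0 * u + T 2)^2 + (A 3 0 * u + T 3)^2) - L^2 with hCdef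
  have hC : 0 ≤ C := by
    have hcs := cs3 (A 1 0 + (A 1 1 * x 0 + A 1 2 * x 1 + A 1 3 * x 2))
      (A 2 0 + (A 2 1 * x 0 + A 2 2 * x 1 + A 2 3 * x 2))
      (A 3 0 + (A 3 1 * x 0 + A 3 2 * x 1 + A 3 3 * x 2))
      (A 1 0 * u + T 1) (A 2 0 * u + T 2) (A 3 0 * u + T 3)
    rw [hSab, hSa] at hcs
    rw [hCdef]
    nlinarith [hcs, mul_pos hD hD]
  have hf : ∀ r : ℝ, (∑ i : Fin 3,
      (A i.succ 0 * (u + r) + r * ∑ j : Fin 3, A i.succ j.succ * x j + T i.succ)^2)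
      = (r*D+L)^2 + C := by
    intro r
    rw [hCdef]
    simp only [Fin.sum_univ_three, s0, s1, s2]
    linear_combination (r^2) * hSa + (2*r) * hSab
  exact sqrt_aux (fun r => ∑ i : Fin 3,
    (A i.succ 0 * (u + r) + r * ∑ j : Fin 3, A i.succ j.succ * x j + T i.succ)^2) D L C hD hC hf
end

section
/- Let A be a 4×4 real orthochronous Lorentz matrix (Aᵀ η A = η with η = diag(-1,1,1,1) and A^0_0 > 0), T = (T⁰, T¹, T², T³) ∈ ℝ⁴, u ∈ ℝ, and let x̃ be a spatial unit vector. For r > 0 define r̄(r) = √( Σ_{i=1}^{3} [ A^i_0 (u + r) + r Σ_{j=1}^{3} A^i_j x̃ʲ + Tⁱ ]² ) and ū(r) = A^0_0 (u + r) + r Σ_{i=1}^{3} A^0_i x̃ⁱ + T⁰ − r̄(r). Set D = A^0_0 + Σ_{j=1}^{3} A^0_j x̃ʲ, K = 1/D, and f̃ = T⁰·D − Σ_{i=1}^{3} Tⁱ (A^i_0 + Σ_{j=1}^{3} A^i_j x̃ʲ). Then ū(r) converges to K·(u + f̃) as r → ∞. -/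
open Matrix Filter

lemma aux_limit {f : ℝ → ℝ} (D C E L V : ℝ) (hD : 0 < D) (hV : V = L - C/D)
    (hf : ∀ r : ℝ, 0 < r → f r = L + (r*D - Real.sqrt (r^2*D^2 + 2*r*C + E)))
    (hQ : ∀ r : ℝ, 0 ≤ r^2*D^2 + 2*r*C + E) :
    Tendsto f atTop (nhds V) := by
  have hcont : ContinuousAt
      (fun s : ℝ => L + (-(2*C) - E*s)/(D + Real.sqrt (D^2 + 2*C*s + E*s^2))) 0 := by
    have hden : D + Real.sqrt (D^2 + 2*C*0 + E*0^2) ≠ 0 := by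
      have := Real.sqrt_nonneg (D^2 + 2*C*0 + E*0^2); linarith
    have hnum : ContinuousAt (fun s:ℝ => -(2*C) - E*s) 0 := by fun_prop
    have hdenc : ContinuousAt (fun s:ℝ => D + Real.sqrt (D^2+2*C*s+E*s^2)) 0 := by fun_prop
    exact continuousAt_const.add (hnum.div hdenc hden)
  have h1 : Tendsto (fun r : ℝ => r⁻¹) atTop (nhds 0) := tendsto_inv_atTop_zero
  have h2 := hcont.tendsto.comp h1
  simp only [Function.comp_def] at h2
  have h3 : L + (-(2*C) - E*0)/(D + Real.sqrt (D^2 + 2*C*0 + E*0^2)) = V := by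
    rw [hV]
    have h4 : D^2 + 2*C*0 + E*0^2 = D^2 := by ring
    rw [h4, Real.sqrt_sq hD.le]
    field_simp
    ring
  rw [h3] at h2
  have heq : (fun r : ℝ => L + (-(2*C) - E*r⁻¹)/(D + Real.sqrt (D^2 + 2*C*r⁻¹ + E*r⁻¹^2)))
      =ᶠ[atTop] f := by
    filter_upwards [eventually_gt_atTop 0] with r hr
    rw [hf r hr]
    have hr' : r ≠ 0 := ne_of_gt hr
    have hQr := hQ r
    set t := Real.sqrt (r^2*D^2+2*r*C+E) with ht_def
    have ht0 : 0 ≤ t := Real.sqrt_nonneg _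
    have ht2 : t^2 = r^2*D^2+2*r*C+E := Real.sq_sqrt hQr
    have hinner : D^2 + 2*C*r⁻¹ + E*r⁻¹^2 = (r^2*D^2+2*r*C+E) * (r⁻¹)^2 := by
      field_simp
    have hsq : Real.sqrt (D^2 + 2*C*r⁻¹ + E*r⁻¹^2) = t * r⁻¹ := by
      rw [hinner, Real.sqrt_mul hQr, Real.sqrt_sq (by positivity)]
    rw [hsq]
    have hden : D + t * r⁻¹ ≠ 0 := by
      have : 0 ≤ t * r⁻¹ := by positivity
      linarith
    have key : (-(2*C) - E*r⁻¹)/(D + t*r⁻¹) = r*D - t := by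
      rw [div_eq_iff hden]
      field_simp
      linear_combination ht2
    rw [key]
  exact Tendsto.congr' heq h2

set_option maxHeartbeats 1000000 in
/-- Let `A` be an orthochronous Lorentz matrix, `T ∈ ℝ⁴`, `u ∈ ℝ`, and `x̃` a spatial unit
vector. With `r̄(r) = √(Σᵢ (Aⁱ₀(u+r) + r Σⱼ Aⁱⱼ x̃ʲ + Tⁱ)²)` and
`ū(r) = A⁰₀(u+r) + r Σᵢ A⁰ᵢ x̃ⁱ + T⁰ − r̄(r)`, setting `D = A⁰₀ + Σⱼ A⁰ⱼ x̃ʲ`, `K = 1/D`,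
`f̃ = T⁰ D − Σᵢ Tⁱ (Aⁱ₀ + Σⱼ Aⁱⱼ x̃ʲ)`, the transformed retarded time `ū(r)` converges to
`K (u + f̃)` as `r → ∞`. -/
theorem transformed_retarded_time_limit
    (A : Matrix (Fin 4) (Fin 4) ℝ) (hA : Aᵀ * minkowskiEta * A = minkowskiEta)
    (hpos : 0 < A 0 0)
    (T : Fin 4 → ℝ) (u : ℝ)
    (x : Fin 3 → ℝ) (hx : ∑ i : Fin 3, (x i) ^ 2 = 1) :
    Tendsto
      (fun r : ℝ =>
        A 0 0 * (u + r) + r * (∑ i : Fin 3, A 0 i.succ * x i) + T 0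
          - Real.sqrt (∑ i : Fin 3,
              (A i.succ 0 * (u + r) + r * ∑ j : Fin 3, A i.succ j.succ * x j + T i.succ) ^ 2))
      atTop
      (nhds ((1 / (A 0 0 + ∑ j : Fin 3, A 0 j.succ * x j)) *
        (u + (T 0 * (A 0 0 + ∑ j : Fin 3, A 0 j.succ * x j)
          - ∑ i : Fin 3, T i.succ * (A i.succ 0 + ∑ j : Fin 3, A i.succ j.succ * x j))))) := by
  -- eta squared is one
  have hEta2 : minkowskiEta * minkowskiEta = 1 := by
    ext i j
    fin_cases i <;> fin_cases j <;>
      simp [minkowskiEta, Matrix.mul_apply, Fin.sum_univ_four, Matrix.one_apply]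
  -- row form of Lorentz condition
  have hBA : (minkowskiEta * Aᵀ * minkowskiEta) * A = 1 := by
    rw [Matrix.mul_assoc, Matrix.mul_assoc, ← Matrix.mul_assoc Aᵀ, hA, hEta2]
  have hAB : A * (minkowskiEta * Aᵀ * minkowskiEta) = 1 := mul_eq_one_comm.mp hBA
  have hrow : A * minkowskiEta * Aᵀ = minkowskiEta := by
    rw [← Matrix.mul_assoc, ← Matrix.mul_assoc] at hAB
    calc A * minkowskiEta * Aᵀ = A * minkowskiEta * Aᵀ * (minkowskiEta * minkowskiEta) := by
          rw [hEta2, Matrix.mul_one]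
      _ = (A * minkowskiEta * Aᵀ * minkowskiEta) * minkowskiEta := by
          simp only [Matrix.mul_assoc]
      _ = minkowskiEta := by rw [hAB, Matrix.one_mul]
  -- scalar Lorentz identities (columns)
  have h00 := congrFun (congrFun hA 0) 0
  have h01 := congrFun (congrFun hA 0) 1
  have h02 := congrFun (congrFun hA 0) 2
  have h03 := congrFun (congrFun hA 0) 3
  have h11 := congrFun (congrFun hA 1) 1
  have h12 := congrFun (congrFun hA 1) 2
  have h13 := congrFun (congrFun hA 1) 3
  have h22 := congrFun (congrFun hA 2) 2
  have h23 := congrFun (congrFun hA 2) 3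
  have h33 := congrFun (congrFun hA 3) 3
  have hb := congrFun (congrFun hrow 0) 0
  simp [Matrix.mul_apply, minkowskiEta, Fin.sum_univ_four, Matrix.diagonal]
    at h00 h01 h02 h03 h11 h12 h13 h22 h23 h33 hb
  simp only [Fin.sum_univ_three, show ((0:Fin 3).succ : Fin 4) = 1 from rfl,
    show ((1:Fin 3).succ : Fin 4) = 2 from rfl, show ((2:Fin 3).succ : Fin 4) = 3 from rfl]
    at hx ⊢
  have hcs : (A 0 1 * x 0 + A 0 2 * x 1 + A 0 3 * x 2) ^ 2 ≤ A 0 0 ^ 2 - 1 := by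
    nlinarith [hb, hx, sq_nonneg (A 0 1 * x 1 - A 0 2 * x 0),
      sq_nonneg (A 0 1 * x 2 - A 0 3 * x 0), sq_nonneg (A 0 2 * x 2 - A 0 3 * x 1)]
  have hD : 0 < A 0 0 + (A 0 1 * x 0 + A 0 2 * x 1 + A 0 3 * x 2) := by
    nlinarith [hcs, hpos]
  have hv : (A 1 0 + (A 1 1 * x 0 + A 1 2 * x 1 + A 1 3 * x 2)) ^ 2
      + (A 2 0 + (A 2 1 * x 0 + A 2 2 * x 1 + A 2 3 * x 2)) ^ 2
      + (A 3 0 + (A 3 1 * x 0 + A 3 2 * x 1 + A 3 3 * x 2)) ^ 2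
      = (A 0 0 + (A 0 1 * x 0 + A 0 2 * x 1 + A 0 3 * x 2)) ^ 2 := by
    linear_combination h00 + 2*x 0*h01 + 2*x 1*h02 + 2*x 2*h03 + x 0^2*h11
      + 2*x 0*x 1*h12 + 2*x 0*x 2*h13 + x 1^2*h22 + 2*x 1*x 2*h23 + x 2^2*h33 + hx
  have hvc : (A 1 0 + (A 1 1 * x 0 + A 1 2 * x 1 + A 1 3 * x 2)) * A 1 0
      + (A 2 0 + (A 2 1 * x 0 + A 2 2 * x 1 + A 2 3 * x 2)) * A 2 0
      + (A 3 0 + (A 3 1 * x 0 + A 3 2 * x 1 + A 3 3 * x 2)) * A 3 0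
      = A 0 0 * (A 0 0 + (A 0 1 * x 0 + A 0 2 * x 1 + A 0 3 * x 2)) - 1 := by
    linear_combination h00 + x 0*h01 + x 1*h02 + x 2*h03
  have harg : ∀ r : ℝ,
      (A 1 0 * (u + r) + r * (A 1 1 * x 0 + A 1 2 * x 1 + A 1 3 * x 2) + T 1) ^ 2 +
        (A 2 0 * (u + r) + r * (A 2 1 * x 0 + A 2 2 * x 1 + A 2 3 * x 2) + T 2) ^ 2 +
        (A 3 0 * (u + r) + r * (A 3 1 * x 0 + A 3 2 * x 1 + A 3 3 * x 2) + T 3) ^ 2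
      = r ^ 2 * (A 0 0 + (A 0 1 * x 0 + A 0 2 * x 1 + A 0 3 * x 2)) ^ 2
        + 2 * r * ((A 1 0 + (A 1 1 * x 0 + A 1 2 * x 1 + A 1 3 * x 2)) * (A 1 0 * u + T 1)
          + (A 2 0 + (A 2 1 * x 0 + A 2 2 * x 1 + A 2 3 * x 2)) * (A 2 0 * u + T 2)
          + (A 3 0 + (A 3 1 * x 0 + A 3 2 * x 1 + A 3 3 * x 2)) * (A 3 0 * u + T 3))
        + ((A 1 0 * u + T 1) ^ 2 + (A 2 0 * u + T 2) ^ 2 + (A 3 0 * u + T 3) ^ 2) := by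
    intro r
    linear_combination r ^ 2 * hv
  refine aux_limit (A 0 0 + (A 0 1 * x 0 + A 0 2 * x 1 + A 0 3 * x 2))
    ((A 1 0 + (A 1 1 * x 0 + A 1 2 * x 1 + A 1 3 * x 2)) * (A 1 0 * u + T 1)
      + (A 2 0 + (A 2 1 * x 0 + A 2 2 * x 1 + A 2 3 * x 2)) * (A 2 0 * u + T 2)
      + (A 3 0 + (A 3 1 * x 0 + A 3 2 * x 1 + A 3 3 * x 2)) * (A 3 0 * u + T 3))
    ((A 1 0 * u + T 1) ^ 2 + (A 2 0 * u + T 2) ^ 2 + (A 3 0 * u + T 3) ^ 2)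
    (A 0 0 * u + T 0) _ hD ?_ ?_ ?_
  · -- limit value identity
    rw [eq_sub_iff_add_eq]
    field_simp
    linear_combination u * hvc
  · intro r hr
    rw [harg r]
    ring
  · intro r
    rw [← harg r]
    positivity
end
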